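/- arXiv:1306.5601 — 7 statements merged into one kernel-verified Lean document; each statement's English description precedes it below -/
import Mathlib

section
/- For every non-increasing sequence s = (x_1,...,x_n) in S_n(N), rank(s) equals the number of sequences s' in S_n(N) with s' <lex s. -/
/-- `s : Fin n → ℕ` is a non-increasing sequence of length `n` over the alphabet
`N = {0,1,...,k}`. -/
def IsNonInc {n : ℕ} (k : ℕ) (s : Fin n → ℕ) : Prop :=
  (∀ i, s i ≤ k) ∧ ∀ i j : Fin n, i ≤ j → s j ≤ s i

/-- Strict lexicographic order: `s <lex t` iff there is an index `j` with
`s i = t i` for all `i < j` and `s j < t j`. -/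
def LexLt {n : ℕ} (s t : Fin n → ℕ) : Prop :=
  ∃ j : Fin n, (∀ i, i < j → s i = t i) ∧ s j < t j

/-- `rank(s) = ∑_{i=1}^n C(n + x_i - i, x_i - 1)`, where a summand with
`x_i = 0` is taken to be `0` (indices `i : Fin n` are 0-based, so `i+1` is the
1-based position). -/
def rank {n : ℕ} (s : Fin n → ℕ) : ℕ :=
  ∑ i : Fin n, if s i = 0 then 0 else Nat.choose (n + s i - ((i : ℕ) + 1)) (s i - 1)

/-! Split the sequences below `s = (a, u)` by their first entry. Those starting with some
`b < a` are exactly the non-increasing sequences over `{0, …, a - 1}`; by stars and bars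
(Pascal's rule, according to whether the first entry is the largest letter) there are
`C(n + a, a - 1)` of them, the first summand of `rank s`. Those starting with `a` are `a`
followed by a sequence below `u`, and such a sequence is automatically bounded by `a`, so
induction on `n` accounts for the remaining summands. -/

section

variable {m k : ℕ}

theorem IsNonInc.mono {k' : ℕ} (h : k ≤ k') {t : Fin m → ℕ} (ht : IsNonInc k t) :
    IsNonInc k' t :=
  ⟨fun i => (ht.1 i).trans h, ht.2⟩

theorem isNonInc_cons_iff {a : ℕ} {t : Fin m → ℕ} :
    IsNonInc k (Fin.cons a t : Fin (m + 1) → ℕ) ↔ a ≤ k ∧ IsNonInc a t := by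
  simp only [IsNonInc, Fin.forall_fin_succ, Fin.cons_zero, Fin.cons_succ, le_refl,
    Fin.zero_le, Fin.succ_le_succ_iff, Fin.succ_ne_zero, Fin.le_zero_iff, forall_true_left,
    true_and, IsEmpty.forall_iff]
  constructor
  · rintro ⟨⟨hk, -⟩, ht⟩
    exact ⟨hk, ht⟩
  · rintro ⟨hk, h0, hmono⟩
    exact ⟨⟨hk, fun i => (h0 i).trans hk⟩, h0, hmono⟩

theorem lexLt_cons_iff {a b : ℕ} {t u : Fin m → ℕ} :
    LexLt (Fin.cons a t : Fin (m + 1) → ℕ) (Fin.cons b u) ↔ a < b ∨ a = b ∧ LexLt t u := by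
  simp [LexLt, Fin.exists_fin_succ, Fin.forall_fin_succ, Fin.succ_lt_succ_iff, Fin.succ_pos,
    and_assoc]

theorem rank_cons (a : ℕ) (u : Fin m → ℕ) :
    rank (Fin.cons a u : Fin (m + 1) → ℕ) =
      (if a = 0 then 0 else (m + a).choose (a - 1)) + rank u := by
  rw [rank, rank, Fin.sum_univ_succ]
  simp only [Fin.cons_zero, Fin.cons_succ, Fin.val_succ, Fin.val_zero]
  congr 1
  · congr 2
    omega
  · refine Finset.sum_congr rfl fun i _ => ?_
    congr 2
    omega

theorem finite_setOf_isNonInc (m k : ℕ) : {t : Fin m → ℕ | IsNonInc k t}.Finite :=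
  (Set.Finite.pi fun _ => Set.finite_Iic k).subset fun _ ht i _ => ht.1 i

theorem setOf_isNonInc_succ_succ :
    {t : Fin (m + 1) → ℕ | IsNonInc (k + 1) t} =
      {t | IsNonInc k t} ∪ Fin.cons (k + 1) '' {t | IsNonInc (k + 1) t} := by
  ext t
  induction t using Fin.consCases with
  | cons a t =>
    simp only [Set.mem_ofPred_eq, Set.mem_union, Set.mem_image, Fin.cons_inj, isNonInc_cons_iff]
    constructor
    · rintro ⟨ha, ht⟩
      rcases ha.lt_or_eq with ha | rfl
      · exact Or.inl ⟨Nat.le_of_lt_succ ha, ht⟩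
      · exact Or.inr ⟨t, ht, rfl, rfl⟩
    · rintro (⟨ha, ht⟩ | ⟨t, ht, rfl, rfl⟩)
      · exact ⟨ha.trans k.le_succ, ht⟩
      · exact ⟨le_rfl, ht⟩

theorem ncard_setOf_isNonInc (m k : ℕ) :
    {t : Fin m → ℕ | IsNonInc k t}.ncard = (m + k).choose k := by
  induction m generalizing k with
  | zero => simp [IsNonInc]
  | succ m ihm =>
    induction k with
    | zero =>
      have : {t : Fin (m + 1) → ℕ | IsNonInc 0 t} = {0} := by
        ext t
        simp +contextual [IsNonInc, funext_iff]
      simp [this]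
    | succ k ihk =>
      have hdisj : Disjoint {t : Fin (m + 1) → ℕ | IsNonInc k t}
          (Fin.cons (k + 1) '' {t | IsNonInc (k + 1) t}) := by
        rw [Set.disjoint_left]
        rintro _ ht ⟨t, -, rfl⟩
        simpa using ht.1 0
      rw [setOf_isNonInc_succ_succ, Set.ncard_union_eq hdisj (finite_setOf_isNonInc _ _)
        ((finite_setOf_isNonInc _ _).image _),
        Set.ncard_image_of_injective _ (Fin.cons_right_injective _), ihk, ihm,
        show m + 1 + (k + 1) = m + k + 1 + 1 by omega, Nat.choose_succ_succ,
        Nat.add_right_comm m 1 k, ← add_assoc]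

theorem IsNonInc.of_lexLt {a : ℕ} {t u : Fin m → ℕ} (hu : IsNonInc a u) (ht : IsNonInc k t)
    (htu : LexLt t u) : IsNonInc a t := by
  obtain ⟨j, heq, hlt⟩ := htu
  let z : Fin m := ⟨0, j.pos⟩
  have head_le : t z ≤ u z := by
    by_cases hj : (j : ℕ) = 0
    · exact (Fin.ext hj.symm : z = j) ▸ hlt.le
    · exact (heq z (Nat.pos_of_ne_zero hj)).le
  exact ⟨fun i => (ht.2 z i (Nat.zero_le _)).trans (head_le.trans (hu.1 z)), ht.2⟩

theorem setOf_isNonInc_lexLt_cons {a : ℕ} {u : Fin m → ℕ} (ha : a ≤ k) (hu : IsNonInc a u) :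
    {t : Fin (m + 1) → ℕ | IsNonInc k t ∧ LexLt t (Fin.cons a u)} =
      {t | IsNonInc k t ∧ t 0 < a} ∪ Fin.cons a '' {v | IsNonInc k v ∧ LexLt v u} := by
  ext t
  induction t using Fin.consCases with
  | cons b v =>
    simp only [Set.mem_ofPred_eq, Set.mem_union, Set.mem_image, Fin.cons_inj, isNonInc_cons_iff,
      lexLt_cons_iff, Fin.cons_zero]
    constructor
    · rintro ⟨⟨hb, hv⟩, hlt | ⟨rfl, hvu⟩⟩
      · exact Or.inl ⟨⟨hb, hv⟩, hlt⟩
      · exact Or.inr ⟨v, ⟨hv.mono hb, hvu⟩, rfl, rfl⟩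
    · rintro (⟨hbv, hlt⟩ | ⟨v, ⟨hv, hvu⟩, rfl, rfl⟩)
      · exact ⟨hbv, Or.inl hlt⟩
      · exact ⟨⟨ha, hu.of_lexLt hv hvu⟩, Or.inr ⟨rfl, hvu⟩⟩

theorem ncard_setOf_isNonInc_head_lt {a : ℕ} (ha : a ≤ k + 1) :
    {t : Fin (m + 1) → ℕ | IsNonInc k t ∧ t 0 < a}.ncard =
      if a = 0 then 0 else (m + a).choose (a - 1) := by
  rcases a with _ | c
  · simp
  · have : {t : Fin (m + 1) → ℕ | IsNonInc k t ∧ t 0 < c + 1} = {t | IsNonInc c t} := by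
      ext t
      induction t using Fin.consCases with
      | cons b v =>
        simp only [Set.mem_ofPred_eq, isNonInc_cons_iff, Fin.cons_zero]
        exact ⟨fun ⟨⟨_, hv⟩, hb⟩ => ⟨by omega, hv⟩, fun ⟨hb, hv⟩ => ⟨⟨by omega, hv⟩, by omega⟩⟩
    rw [this, ncard_setOf_isNonInc, if_neg c.succ_ne_zero, Nat.add_sub_cancel, add_assoc,
      add_comm 1 c]

end

/-- For every non-increasing sequence `s` in `S_n(N)`, `rank s` equals the
number of sequences `t` in `S_n(N)` with `t <lex s`. -/
theorem rank_eq_card_lexLt (k n : ℕ) (s : Fin n → ℕ) (hs : IsNonInc k s) :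
    rank s = Set.ncard {t : Fin n → ℕ | IsNonInc k t ∧ LexLt t s} := by
  induction n with
  | zero => simp [rank, LexLt]
  | succ n ih =>
    obtain ⟨a, u, rfl⟩ : ∃ a u, s = Fin.cons a u := ⟨s 0, Fin.tail s, (Fin.cons_self_tail s).symm⟩
    obtain ⟨ha, hu⟩ := isNonInc_cons_iff.mp hs
    have hdisj : Disjoint {t : Fin (n + 1) → ℕ | IsNonInc k t ∧ t 0 < a}
        (Fin.cons a '' {v | IsNonInc k v ∧ LexLt v u}) := by
      rw [Set.disjoint_left]
      rintro _ ⟨-, hlt⟩ ⟨v, -, rfl⟩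
      simp at hlt
    rw [setOf_isNonInc_lexLt_cons ha hu, Set.ncard_union_eq hdisj
      ((finite_setOf_isNonInc _ _).subset fun _ ht => ht.1)
      (((finite_setOf_isNonInc _ _).subset fun _ ht => ht.1).image _),
      ncard_setOf_isNonInc_head_lt (ha.trans k.le_succ),
      Set.ncard_image_of_injective _ (Fin.cons_right_injective _), ← ih u (hu.mono ha), rank_cons]
end

section
/- The map rank : S_n(N) -> ℕ is an order embedding of (S_n(N), <lex) into (ℕ, <): for all s, s' in S_n(N), s <lex s' if and only if rank(s) < rank(s'). In particular, rank is injective. -/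
def rterm (n : ℕ) (u : Fin n → ℕ) (p : Fin n) : ℕ :=
  if u p = 0 then 0 else Nat.choose (n + u p - ((p : ℕ) + 1)) (u p - 1)

lemma rank_eq_sum_rterm {n : ℕ} (u : Fin n → ℕ) : rank u = ∑ p : Fin n, rterm n u p := rfl

lemma hockey (A : ℕ) : ∀ D : ℕ,
    ∑ d ∈ Finset.range D, Nat.choose (A + d) A = Nat.choose (A + D) (A + 1)
  | 0 => by simp
  | (D + 1) => by
      rw [Finset.sum_range_succ, hockey A D, show A + (D + 1) = (A + D) + 1 by omega,
        Nat.choose_succ_succ']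
      omega

lemma term_le (n p v m : ℕ) (hp : p < n) (hv : v ≤ m) :
    (if v = 0 then 0 else Nat.choose (n + v - (p + 1)) (v - 1)) ≤
      Nat.choose (n + m - (p + 1)) (m - 1) := by
  rcases Nat.eq_zero_or_pos v with h0 | h1
  · simp [h0]
  · rw [if_neg (by omega)]
    have hm1 : 1 ≤ m := le_trans h1 hv
    set A := n - (p + 1) with hA
    have e1 : n + v - (p + 1) = A + v := by omega
    have e2 : n + m - (p + 1) = A + m := by omega
    rw [e1, e2]
    have s1 : Nat.choose (A + v) (v - 1) = Nat.choose (A + v) (A + 1) := by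
      rw [← Nat.choose_symm (by omega : A + 1 ≤ A + v)]
      congr 1
      omega
    have s2 : Nat.choose (A + m) (m - 1) = Nat.choose (A + m) (A + 1) := by
      rw [← Nat.choose_symm (by omega : A + 1 ≤ A + m)]
      congr 1
      omega
    rw [s1, s2]
    exact Nat.choose_le_choose _ (by omega)

lemma filter_sum_eq {n : ℕ} (j : Fin n) (f : ℕ → ℕ) :
    ∑ p ∈ Finset.univ.filter (fun p : Fin n => j ≤ p), f (p : ℕ) =
      ∑ i ∈ Finset.Ico (j : ℕ) n, f i := by
  rw [Finset.sum_filter]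
  have h1 : ∀ p : Fin n, (if j ≤ p then f (p : ℕ) else 0) =
      (fun i : ℕ => if (j : ℕ) ≤ i then f i else 0) (p : ℕ) := by
    intro p
    show (if j ≤ p then f (p : ℕ) else 0) = if (j : ℕ) ≤ (p : ℕ) then f (p : ℕ) else 0
    rcases le_or_gt j p with hc | hc
    · rw [if_pos hc, if_pos (Fin.le_def.mp hc)]
    · rw [if_neg (not_le.mpr hc), if_neg (fun hcc => (not_le.mpr hc) (Fin.le_def.mpr hcc))]
  rw [Finset.sum_congr rfl fun p _ => h1 p,
    Fin.sum_univ_eq_sum_range (fun i : ℕ => if (j : ℕ) ≤ i then f i else 0) n,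
    ← Finset.sum_filter]
  congr 1
  ext i
  simp only [Finset.mem_filter, Finset.mem_range, Finset.mem_Ico]
  omega

lemma suffix_lt {n : ℕ} (s : Fin n → ℕ) (j : Fin n) (m : ℕ)
    (h : ∀ p : Fin n, j ≤ p → s p ≤ m) :
    (∑ p ∈ Finset.univ.filter (fun p : Fin n => j ≤ p), rterm n s p) <
      Nat.choose (n + m - (j : ℕ)) m := by
  rcases Nat.eq_zero_or_pos m with hm0 | hm1
  · have hz : (∑ p ∈ Finset.univ.filter (fun p : Fin n => j ≤ p), rterm n s p) = 0 := by
      apply Finset.sum_eq_zero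
      intro p hp
      have hp' : j ≤ p := (Finset.mem_filter.mp hp).2
      have : s p = 0 := by have := h p hp'; omega
      simp [rterm, this]
    rw [hz, hm0]
    simp
  · have hjn : (j : ℕ) < n := j.isLt
    have hb : (∑ p ∈ Finset.univ.filter (fun p : Fin n => j ≤ p), rterm n s p) ≤
        ∑ p ∈ Finset.univ.filter (fun p : Fin n => j ≤ p),
          (fun i : ℕ => Nat.choose (n + m - (i + 1)) (m - 1)) (p : ℕ) := by
      apply Finset.sum_le_sum
      intro p hp
      have hp' : j ≤ p := (Finset.mem_filter.mp hp).2
      exact term_le n (p : ℕ) (s p) m p.isLt (h p hp')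
    replace hb := hb.trans_eq (filter_sum_eq j (fun i => Nat.choose (n + m - (i + 1)) (m - 1)))
    have hIco : ∑ i ∈ Finset.Ico (j : ℕ) n, Nat.choose (n + m - (i + 1)) (m - 1) =
        ∑ d ∈ Finset.range (n - (j : ℕ)), Nat.choose ((m - 1) + (d + 1)) (m - 1) := by
      rw [Finset.sum_Ico_eq_sum_range,
        ← Finset.sum_range_reflect (fun d => Nat.choose (n + m - ((j : ℕ) + d + 1)) (m - 1))
          (n - (j : ℕ))]
      apply Finset.sum_congr rfl
      intro d hd
      have hd' : d < n - (j : ℕ) := Finset.mem_range.mp hd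
      congr 1
      omega
    have hkey : (∑ d ∈ Finset.range (n - (j : ℕ)), Nat.choose ((m - 1) + (d + 1)) (m - 1)) + 1 =
        Nat.choose ((m - 1) + ((n - (j : ℕ)) + 1)) ((m - 1) + 1) := by
      have h2 := hockey (m - 1) ((n - (j : ℕ)) + 1)
      rw [Finset.sum_range_succ'] at h2
      simpa using h2
    have htgt : Nat.choose (n + m - (j : ℕ)) m =
        Nat.choose ((m - 1) + ((n - (j : ℕ)) + 1)) ((m - 1) + 1) := by
      congr 1 <;> omega
    rw [htgt]
    omega

lemma rank_lt_of_lex {n k : ℕ} (s t : Fin n → ℕ) (hs : IsNonInc k s)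
    (hlt : LexLt s t) : rank s < rank t := by
  obtain ⟨j, hpre, hj⟩ := hlt
  have hsplit : ∀ u : Fin n → ℕ, rank u =
      (∑ p ∈ Finset.univ.filter (fun p : Fin n => p < j), rterm n u p) +
      ∑ p ∈ Finset.univ.filter (fun p : Fin n => j ≤ p), rterm n u p := by
    intro u
    rw [rank_eq_sum_rterm,
      ← Finset.sum_filter_add_sum_filter_not Finset.univ (fun p : Fin n => p < j)]
    congr 1
    apply Finset.sum_congr
    · ext p; simp [not_lt]
    · intros; rfl
  rw [hsplit s, hsplit t]
  have hprefix : (∑ p ∈ Finset.univ.filter (fun p : Fin n => p < j), rterm n s p) =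
      ∑ p ∈ Finset.univ.filter (fun p : Fin n => p < j), rterm n t p := by
    apply Finset.sum_congr rfl
    intro p hp
    have : p < j := (Finset.mem_filter.mp hp).2
    simp [rterm, hpre p this]
  have htj : 1 ≤ t j := by omega
  have hsuf : (∑ p ∈ Finset.univ.filter (fun p : Fin n => j ≤ p), rterm n s p) <
      rterm n t j := by
    have h1 : ∀ p : Fin n, j ≤ p → s p ≤ t j - 1 := by
      intro p hp
      have := hs.2 j p hp
      omega
    have h2 := suffix_lt s j (t j - 1) h1
    have h3 : Nat.choose (n + (t j - 1) - (j : ℕ)) (t j - 1) = rterm n t j := by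
      rw [rterm, if_neg (by omega)]
      congr 1
      omega
    omega
  have hsingle : rterm n t j ≤
      ∑ p ∈ Finset.univ.filter (fun p : Fin n => j ≤ p), rterm n t p := by
    apply Finset.single_le_sum (fun _ _ => Nat.zero_le _)
    simp
  omega

lemma lex_total {n : ℕ} (s t : Fin n → ℕ) (h : s ≠ t) : LexLt s t ∨ LexLt t s := by
  have hne : (Finset.univ.filter (fun i : Fin n => s i ≠ t i)).Nonempty := by
    obtain ⟨i, hi⟩ := Function.ne_iff.mp h
    exact ⟨i, by simp [hi]⟩
  set j := (Finset.univ.filter (fun i : Fin n => s i ≠ t i)).min' hne with hjdef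
  have hj : s j ≠ t j := by
    have := Finset.min'_mem _ hne
    simpa using this
  have hpre : ∀ i, i < j → s i = t i := by
    intro i hi
    by_contra hne2
    have : j ≤ i := Finset.min'_le _ i (by simp [hne2])
    exact absurd hi (not_lt.mpr this)
  rcases lt_or_gt_of_ne hj with h1 | h1
  · exact Or.inl ⟨j, hpre, h1⟩
  · exact Or.inr ⟨j, fun i hi => (hpre i hi).symm, h1⟩

/-- `rank` is an order embedding of `(S_n(N), <lex)` into `(ℕ, <)`:
for all `s, t` in `S_n(N)`, `s <lex t ↔ rank s < rank t`.
In particular, `rank` is injective on `S_n(N)`. -/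
theorem rank_orderEmbedding (k n : ℕ) :
    (∀ s t : Fin n → ℕ, IsNonInc k s → IsNonInc k t →
      (LexLt s t ↔ rank s < rank t)) ∧
    Set.InjOn (rank (n := n)) {s : Fin n → ℕ | IsNonInc k s} := by
  constructor
  · intro s t hs ht
    constructor
    · exact rank_lt_of_lex s t hs
    · intro hr
      rcases eq_or_ne s t with rfl | hne
      · exact absurd hr (lt_irrefl _)
      · rcases lex_total s t hne with h | h
        · exact h
        · exact absurd (rank_lt_of_lex t s ht h) (by omega)
  · intro s hs t ht hr
    by_contra hne
    rcases lex_total s t hne with h | h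
    · have := rank_lt_of_lex s t hs h; omega
    · have := rank_lt_of_lex t s ht h; omega
end

section
/- The map rank is a bijection from S_n(N) onto the set {0, 1, ..., C(n+k, k) - 1} of natural numbers. -/
/-- Contribution of the head entry `m` of a sequence of length `n+1`. -/
def hc (n m : ℕ) : ℕ := if m = 0 then 0 else Nat.choose (n + m) (m - 1)

lemma hc_succ (n m : ℕ) : hc n (m + 1) = hc n m + Nat.choose (n + m) m := by
  cases m with
  | zero => simp [hc]
  | succ m =>
    simp only [hc, Nat.succ_ne_zero, if_false, Nat.add_sub_cancel]
    rw [show n + (m + 1 + 1) = (n + (m + 1)) + 1 by ring]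
    exact Nat.choose_succ_succ (n + (m + 1)) m

lemma hc_le (n : ℕ) : Monotone (hc n) :=
  monotone_nat_of_le_succ (fun m => by rw [hc_succ]; exact Nat.le_add_right _ _)

lemma hc_succ_eq (n k : ℕ) : hc n (k + 1) = Nat.choose (n + 1 + k) k := by
  simp only [hc, Nat.succ_ne_zero, if_false, Nat.add_sub_cancel]
  congr 1
  omega

lemma hc_interval_unique (n : ℕ) {m m' r : ℕ} (h1 : hc n m ≤ r) (h2 : r < hc n (m + 1))
    (h3 : hc n m' ≤ r) (h4 : r < hc n (m' + 1)) : m = m' := by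
  by_contra h
  rcases Nat.lt_or_ge m m' with hlt | hge
  · have := hc_le n (show m + 1 ≤ m' by omega)
    omega
  · have hlt : m' < m := lt_of_le_of_ne hge (Ne.symm h)
    have := hc_le n (show m' + 1 ≤ m by omega)
    omega

lemma hc_exists_interval (n : ℕ) : ∀ K r, r < hc n K →
    ∃ m, m < K ∧ hc n m ≤ r ∧ r < hc n (m + 1) := by
  intro K
  induction K with
  | zero => intro r hr; simp [hc] at hr
  | succ K ih =>
    intro r hr
    by_cases h : hc n K ≤ r
    · exact ⟨K, Nat.lt_succ_self K, h, hr⟩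
    · obtain ⟨m, hm, h1, h2⟩ := ih r (Nat.lt_of_not_le h)
      exact ⟨m, hm.trans (Nat.lt_succ_self K), h1, h2⟩

lemma rank_succ (n : ℕ) (s : Fin (n + 1) → ℕ) :
    rank s = hc n (s 0) + rank (fun i => s i.succ) := by
  unfold rank hc
  rw [Fin.sum_univ_succ]
  congr 1
  · by_cases h : s 0 = 0
    · simp [h]
    · simp only [h, if_false, Fin.val_zero]
      congr 1
      omega
  · apply Finset.sum_congr rfl
    intro i _
    by_cases h : s i.succ = 0
    · simp [h]
    · simp only [h, if_false, Fin.val_succ]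
      congr 1
      omega

lemma isNonInc_succ {n k : ℕ} {s : Fin (n + 1) → ℕ} (h : IsNonInc k s) :
    s 0 ≤ k ∧ IsNonInc (s 0) (fun i => s i.succ) := by
  refine ⟨h.1 0, fun i => h.2 0 i.succ (Fin.zero_le _), fun i j hij => ?_⟩
  exact h.2 i.succ j.succ (Fin.succ_le_succ_iff.mpr hij)

lemma isNonInc_cons {n k m : ℕ} (hm : m ≤ k) {t : Fin n → ℕ} (ht : IsNonInc m t) :
    IsNonInc k (Fin.cons m t) := by
  constructor
  · intro i
    induction i using Fin.cases with
    | zero => simpa using hm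
    | succ j => simpa using (ht.1 j).trans hm
  · intro i j hij
    induction i using Fin.cases with
    | zero =>
      induction j using Fin.cases with
      | zero => simp
      | succ j' => simpa using ht.1 j'
    | succ i' =>
      induction j using Fin.cases with
      | zero =>
        exfalso
        have : (i'.succ : ℕ) ≤ (0 : Fin (n + 1)) := hij
        simp at this
      | succ j' =>
        have hij' : i' ≤ j' := Fin.succ_le_succ_iff.mp hij
        simpa using ht.2 i' j' hij'

/-- `rank` is a bijection from `S_n(N)` onto `{0, 1, ..., C(n+k,k) - 1}`. -/
theorem rank_bijOn (k n : ℕ) :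
    Set.BijOn (rank (n := n)) {s : Fin n → ℕ | IsNonInc k s}
      (Set.Iio (Nat.choose (n + k) k)) := by
  induction n generalizing k with
  | zero =>
    refine ⟨?_, ?_, ?_⟩
    · intro s _
      simp [rank, Nat.choose_self]
    · intro s _ t _ _
      funext i
      exact i.elim0
    · intro r hr
      simp only [Set.mem_Iio, Nat.zero_add, Nat.choose_self] at hr
      refine ⟨fun i => i.elim0, ⟨fun i => i.elim0, fun i => i.elim0⟩, ?_⟩
      simp [rank]
      omega
  | succ n ih =>
    refine ⟨?_, ?_, ?_⟩
    · intro s hs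
      obtain ⟨h0, ht⟩ := isNonInc_succ hs
      have htr := (ih (s 0)).1 ht
      simp only [Set.mem_Iio] at htr ⊢
      rw [rank_succ]
      calc hc n (s 0) + rank (fun i => s i.succ)
          < hc n (s 0) + Nat.choose (n + s 0) (s 0) := by omega
        _ = hc n (s 0 + 1) := (hc_succ n (s 0)).symm
        _ ≤ hc n (k + 1) := hc_le n (Nat.succ_le_succ h0)
        _ = Nat.choose (n + 1 + k) k := hc_succ_eq n k
    · intro s hs t ht he
      obtain ⟨hs0, hst⟩ := isNonInc_succ hs
      obtain ⟨ht0, htt⟩ := isNonInc_succ ht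
      have hsr := (ih (s 0)).1 hst
      have htr := (ih (t 0)).1 htt
      simp only [Set.mem_Iio] at hsr htr
      rw [rank_succ, rank_succ] at he
      have hs1 : hc n (s 0) + rank (fun i => s i.succ) < hc n (s 0 + 1) := by
        rw [hc_succ]; omega
      have ht1 : hc n (t 0) + rank (fun i => t i.succ) < hc n (t 0 + 1) := by
        rw [hc_succ]; omega
      have hA : hc n (t 0) ≤ hc n (s 0) + rank (fun i => s i.succ) := by
        rw [he]; exact Nat.le_add_right _ _
      have hB : hc n (s 0) + rank (fun i => s i.succ) < hc n (t 0 + 1) := by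
        rw [he]; exact ht1
      have hm : s 0 = t 0 := hc_interval_unique n (Nat.le_add_right _ _) hs1 hA hB
      have htail : (fun i : Fin n => s i.succ) = (fun i : Fin n => t i.succ) := by
        apply (ih (s 0)).2.1 hst (hm ▸ htt)
        rw [hm] at he
        omega
      funext i
      refine Fin.cases ?_ ?_ i
      · exact hm
      · exact fun j => congrFun htail j
    · intro r hr
      simp only [Set.mem_Iio] at hr
      rw [← hc_succ_eq] at hr
      obtain ⟨m, hmk, h1, h2⟩ := hc_exists_interval n (k + 1) r hr
      have h2' : r - hc n m < Nat.choose (n + m) m := by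
        rw [hc_succ] at h2; omega
      obtain ⟨t, htmem, htr⟩ := (ih m).2.2 (Set.mem_Iio.mpr h2')
      refine ⟨Fin.cons m t, isNonInc_cons (Nat.lt_succ_iff.mp hmk) htmem, ?_⟩
      rw [rank_succ]
      have : (fun i : Fin n => (Fin.cons m t : Fin (n + 1) → ℕ) i.succ) = t := by
        funext i; simp
      rw [this, Fin.cons_zero, htr]
      omega
end

section
/- Define rho : M_n(N) -> ℕ by rho(x) = rank(<x>), where <x> is the non-increasing sequence of length n listing the elements of the multiset x. Then rho is injective and order-preserving with respect to strict max-min-fair comparison: for all x, y in M_n(N), x ≺mmf y if and only if rho(x) < rho(y). -/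
/-- `⟨x⟩`: the non-increasing sequence of length `n` listing the elements of a
multiset `x` of cardinality `n` (entry at position `i`). -/
def descSeq (n : ℕ) (x : Multiset ℕ) : Fin n → ℕ :=
  fun i => (Multiset.sort x (· ≥ ·)).getD i 0


/-!
Peeling off the first entry `a` of an `n`-tuple splits `rank` as `rankTerm n a` plus the rank of
the tail. By the Pascal rule `rankTerm (m+1) v + rankTerm m (v+1) = rankTerm (m+1) (v+1)`, the rank
of a non-increasing tuple whose entries are at most `a` is below `rankTerm n (a + 1)`. Hence, for
non-increasing tuples, raising the first entry where they differ outweighs everything after it, so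
`rank` is strictly monotone for the lexicographic order; and `⟨x⟩` determines `x`.
-/

/-- `rankTerm m v = C(m + v - 1, v - 1)`, and `0` for `v = 0`: the summand of `rank` for an entry
`v` followed by `m - 1` further entries. -/
def rankTerm (m : ℕ) : ℕ → ℕ
  | 0 => 0
  | v + 1 => (m + v).choose v

lemma rankTerm_monotone (m : ℕ) : Monotone (rankTerm m) := by
  refine monotone_nat_of_le_succ fun v => ?_
  cases v with
  | zero => exact Nat.zero_le _
  | succ v =>
    show (m + v).choose v ≤ (m + v + 1).choose (v + 1)
    rw [Nat.choose_succ_succ]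
    exact Nat.le_add_right _ _

lemma rankTerm_add_rankTerm (m v : ℕ) :
    rankTerm (m + 1) v + rankTerm m (v + 1) = rankTerm (m + 1) (v + 1) := by
  cases v with
  | zero => simp [rankTerm]
  | succ v =>
    show (m + 1 + v).choose v + (m + (v + 1)).choose (v + 1) = (m + 1 + (v + 1)).choose (v + 1)
    rw [show m + 1 + (v + 1) = m + v + 1 + 1 by omega, Nat.choose_succ_succ,
      show m + 1 + v = m + v + 1 by omega, show m + (v + 1) = m + v + 1 by omega]

lemma rank_cons_s6 {n : ℕ} (a : ℕ) (s : Fin n → ℕ) :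
    rank (Fin.cons a s : Fin (n + 1) → ℕ) = rankTerm (n + 1) a + rank s := by
  rw [rank, Fin.sum_univ_succ, rank]
  congr 1
  · cases a <;> simp [rankTerm]
  · refine Finset.sum_congr rfl fun i _ => ?_
    simp only [Fin.cons_succ, Fin.val_succ]
    congr 2
    omega

lemma rank_lt_rankTerm {n : ℕ} {s : Fin n → ℕ} (hs : Antitone s) {v : ℕ} (hv : ∀ i, s i ≤ v) :
    rank s < rankTerm n (v + 1) := by
  induction n generalizing v with
  | zero => simp [rank, rankTerm]
  | succ n ih =>
    rw [← Fin.cons_self_tail s, rank_cons_s6]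
    have htail : rank (Fin.tail s) < rankTerm n (s 0 + 1) :=
      ih (hs.comp_monotone Fin.strictMono_succ.monotone) fun i => hs (Fin.zero_le i.succ)
    calc rankTerm (n + 1) (s 0) + rank (Fin.tail s)
        < rankTerm (n + 1) (s 0) + rankTerm n (s 0 + 1) := by omega
      _ = rankTerm (n + 1) (s 0 + 1) := rankTerm_add_rankTerm n (s 0)
      _ ≤ rankTerm (n + 1) (v + 1) := rankTerm_monotone _ (Nat.succ_le_succ (hv 0))

lemma rank_lt_rank_of_toLex_lt {n : ℕ} {s t : Fin n → ℕ} (hs : Antitone s)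
    (h : toLex s < toLex t) : rank s < rank t := by
  induction n with
  | zero => exact absurd h (by rw [Subsingleton.elim s t]; exact lt_irrefl _)
  | succ n ih =>
    rw [← Fin.cons_self_tail s, ← Fin.cons_self_tail t] at h
    rcases (Fin.pi_lex_lt_cons_cons _).1 h with hlt | ⟨heq, htail⟩
    · calc rank s < rankTerm (n + 1) (s 0 + 1) := rank_lt_rankTerm hs fun i => hs (Fin.zero_le i)
        _ ≤ rankTerm (n + 1) (t 0) := rankTerm_monotone _ hlt
        _ ≤ rank t := by
          rw [← Fin.cons_self_tail t, rank_cons_s6]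
          exact Nat.le_add_right _ _
    · rw [← Fin.cons_self_tail s, ← Fin.cons_self_tail t, rank_cons_s6, rank_cons_s6, heq]
      exact Nat.add_lt_add_left (ih (hs.comp_monotone Fin.strictMono_succ.monotone) htail) _

lemma rank_strictMonoOn_antitone (n : ℕ) :
    StrictMonoOn (fun s : Lex (Fin n → ℕ) => rank (ofLex s)) {s | Antitone (ofLex s)} :=
  fun _ hs _ _ h => rank_lt_rank_of_toLex_lt hs h

lemma antitone_getD_of_sortedGE {l : List ℕ} (hl : l.SortedGE) : Antitone fun i => l.getD i 0 := by
  intro i j hij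
  show l.getD j 0 ≤ l.getD i 0
  by_cases hj : j < l.length
  · rw [List.getD_eq_getElem _ _ hj, List.getD_eq_getElem _ _ (hij.trans_lt hj)]
    exact hl.getElem_ge_getElem_of_le hij
  · rw [List.getD_eq_default _ _ (not_lt.1 hj)]
    exact Nat.zero_le _

lemma descSeq_antitone (n : ℕ) (x : Multiset ℕ) : Antitone (descSeq n x) :=
  fun _ _ hij => antitone_getD_of_sortedGE (Multiset.pairwise_sort x _).sortedGE hij

lemma ofFn_descSeq {n : ℕ} {x : Multiset ℕ} (hx : Multiset.card x = n) :
    List.ofFn (descSeq n x) = Multiset.sort x (· ≥ ·) := by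
  refine List.ext_getElem (by simp [hx]) fun i h _ => ?_
  rw [List.getElem_ofFn, descSeq, List.getD_eq_getElem]

lemma descSeq_injOn (n : ℕ) : Set.InjOn (descSeq n) {x | Multiset.card x = n} := by
  intro x hx y hy h
  rw [← Multiset.sort_eq x (· ≥ ·), ← Multiset.sort_eq y (· ≥ ·), ← ofFn_descSeq hx,
    ← ofFn_descSeq hy, h]

theorem rho_iso_general (n : ℕ) (x y : Multiset ℕ)
    (hx : Multiset.card x = n) (hy : Multiset.card y = n) :
    (LexLt (descSeq n x) (descSeq n y) ↔
      rank (descSeq n x) < rank (descSeq n y)) ∧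
    (rank (descSeq n x) = rank (descSeq n y) → x = y) := by
  have hmono := rank_strictMonoOn_antitone n
  have hx' := descSeq_antitone n x
  have hy' := descSeq_antitone n y
  -- `LexLt` unfolds to `Pi.Lex (· < ·) (· < ·)`, which is `<` on `Lex (Fin n → ℕ)`.
  exact ⟨(hmono.lt_iff_lt (a := toLex _) (b := toLex _) hx' hy').symm,
    fun h => descSeq_injOn n hx hy (hmono.injOn hx' hy' h)⟩

/-- `ρ(x) = rank ⟨x⟩` is injective on multisets of cardinality `n` over
`{0,...,k}` and order-preserving w.r.t. the strict max-min-fair comparison: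
`x ≺mmf y ↔ ρ x < ρ y` (where `x ≺mmf y` iff `⟨x⟩ <lex ⟨y⟩`). -/
theorem rho_iso (k n : ℕ) (x y : Multiset ℕ)
    (hx : Multiset.card x = n) (hy : Multiset.card y = n)
    (hxk : ∀ a ∈ x, a ≤ k) (hyk : ∀ a ∈ y, a ≤ k) :
    (LexLt (descSeq n x) (descSeq n y) ↔
      rank (descSeq n x) < rank (descSeq n y)) ∧
    (rank (descSeq n x) = rank (descSeq n y) → x = y) :=
  rho_iso_general n x y hx hy
end

section
/- Define rho' : M_n(N) -> ℕ by rho'(x) = rank((k - z_1, k - z_2, ..., k - z_n)), where (z_1 <= z_2 <= ... <= z_n) is the non-decreasing sequence listing the elements of the multiset x (so that (k - z_1, ..., k - z_n) is non-increasing). Then rho' is injective and for all x, y in M_n(N), x is strictly fairer than y for a maximization objective (i.e., the non-decreasing listing of y is lexicographically strictly smaller than the non-decreasing listing of x) if and only if rho'(x) < rho'(y). -/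
/-- The non-decreasing sequence `(z_1 ≤ ... ≤ z_n)` listing the elements of a
multiset `x` of cardinality `n` (entry at position `i`). -/
def ascSeq (n : ℕ) (x : Multiset ℕ) : Fin n → ℕ :=
  fun i => (Multiset.sort x (· ≤ ·)).getD i 0

/-!
Replacing `z` by `k - z` turns "`y`'s listing is lex-smaller than `x`'s" into the ordinary
lex order on non-increasing sequences, so it suffices that `rank` is strictly lex-monotone
there. By Pascal's rule and induction, a non-increasing sequence of length `m` with entries
`≤ v` has rank `< C(m + v, v)`; when the first differing entry rises from at most `v` to
`v + 1`, the larger sequence gains exactly the summand `C(m + v, v)`, which beats the whole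
rank of the smaller one. Totality of the lex order then gives both the equivalence and
injectivity.
-/

lemma rank_eq_add_rank_tail {n : ℕ} (s : Fin (n + 1) → ℕ) :
    rank s = (if s 0 = 0 then 0 else (n + s 0).choose (s 0 - 1)) + rank (Fin.tail s) := by
  rw [rank, Fin.sum_univ_succ, rank]
  congr 1
  · simp [Nat.add_right_comm n 1]
  · refine Finset.sum_congr rfl fun i _ => ?_
    simp only [Fin.tail, Fin.val_succ]
    congr 2
    omega

lemma choose_add_le_choose_add (m : ℕ) {a v : ℕ} (h : a ≤ v) :
    (m + a).choose a ≤ (m + v).choose v := by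
  rw [← Nat.choose_symm_add, ← Nat.choose_symm_add]
  exact Nat.choose_le_choose m (by omega)

lemma ite_choose_add_choose (m a : ℕ) :
    (if a = 0 then 0 else (m + a).choose (a - 1)) + (m + a).choose a
      = (m + 1 + a).choose a := by
  rcases a with _ | b
  · simp
  · simp [Nat.add_right_comm m 1, Nat.choose_succ_succ', ← add_assoc]

lemma rank_lt_choose {n v : ℕ} {s : Fin n → ℕ} (hs : Antitone s) (hv : ∀ i, s i ≤ v) :
    rank s < (n + v).choose v := by
  induction n generalizing v with
  | zero => simp [rank]
  | succ m ih =>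
    have htail : rank (Fin.tail s) < (m + s 0).choose (s 0) :=
      ih (hs.comp_monotone Fin.strictMono_succ.monotone) fun i => hs (Fin.zero_le _)
    calc rank s
        < (if s 0 = 0 then 0 else (m + s 0).choose (s 0 - 1)) + (m + s 0).choose (s 0) := by
          rw [rank_eq_add_rank_tail]; omega
      _ = (m + 1 + s 0).choose (s 0) := ite_choose_add_choose m (s 0)
      _ ≤ (m + 1 + v).choose v := choose_add_le_choose_add _ (hv 0)

lemma rank_lt_rank_of_lexLt {n : ℕ} {s t : Fin n → ℕ} (hs : Antitone s) (h : LexLt s t) :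
    rank s < rank t := by
  induction n with
  | zero => exact h.choose.elim0
  | succ m ih =>
    obtain ⟨j, hpre, hj⟩ := h
    rcases Fin.eq_zero_or_eq_succ j with rfl | ⟨j, rfl⟩
    · obtain ⟨c, hc⟩ : ∃ c, t 0 = c + 1 := ⟨t 0 - 1, by omega⟩
      calc rank s < (m + 1 + c).choose c :=
            rank_lt_choose hs fun i => (hs (Fin.zero_le i)).trans (by omega)
        _ ≤ rank t := by
          rw [rank_eq_add_rank_tail t, hc, if_neg c.succ_ne_zero, Nat.add_sub_cancel,
            Nat.add_right_comm, ← add_assoc]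
          exact Nat.le_add_right _ _
    · rw [rank_eq_add_rank_tail s, rank_eq_add_rank_tail t]
      have htail : rank (Fin.tail s) < rank (Fin.tail t) :=
        ih (hs.comp_monotone Fin.strictMono_succ.monotone)
          ⟨j, fun i hi => hpre i.succ (Fin.succ_lt_succ_iff.mpr hi), hj⟩
      rw [hpre 0 (Fin.succ_pos j)]
      omega

lemma lexLt_const_tsub_iff {n k : ℕ} {s t : Fin n → ℕ} (hs : ∀ i, s i ≤ k) (ht : ∀ i, t i ≤ k) :
    LexLt (fun i => k - s i) (fun i => k - t i) ↔ LexLt t s := by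
  refine exists_congr fun j => and_congr (forall₂_congr fun i _ => ?_) ?_ <;> dsimp only
  · have := hs i; have := ht i; omega
  · have := hs j; have := ht j; omega

lemma ofFn_ascSeq {n : ℕ} {x : Multiset ℕ} (hx : Multiset.card x = n) :
    List.ofFn (ascSeq n x) = x.sort (· ≤ ·) := by
  refine List.ext_getElem (by simp [hx]) fun i _ _ => ?_
  simp [ascSeq, List.getD_eq_getElem?_getD, List.getElem?_eq_getElem ‹_›]

lemma ascSeq_monotone {n : ℕ} {x : Multiset ℕ} (hx : Multiset.card x = n) :
    Monotone (ascSeq n x) := by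
  refine monotone_iff_forall_lt.mpr ?_
  have := Multiset.pairwise_sort x (· ≤ ·)
  rwa [← ofFn_ascSeq hx, List.pairwise_ofFn] at this

lemma ascSeq_le {n k : ℕ} {x : Multiset ℕ} (hxk : ∀ a ∈ x, a ≤ k) (i : Fin n) :
    ascSeq n x i ≤ k := by
  simp only [ascSeq, List.getD_eq_getElem?_getD]
  rcases h : (x.sort (· ≤ ·))[(i : ℕ)]? with _ | a
  · exact Nat.zero_le k
  · exact hxk a ((Multiset.mem_sort _).mp (List.mem_of_getElem? h))

lemma ascSeq_injective {n : ℕ} {x y : Multiset ℕ} (hx : Multiset.card x = n)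
    (hy : Multiset.card y = n) (h : ascSeq n x = ascSeq n y) : x = y := by
  rw [← Multiset.sort_eq x (· ≤ ·), ← ofFn_ascSeq hx, h, ofFn_ascSeq hy, Multiset.sort_eq]

/-- `ρ'(x) = rank (k - z_1, ..., k - z_n)` (where `z` is the non-decreasing
listing of `x`) is injective on multisets of cardinality `n` over `{0,...,k}`,
and `x` is strictly fairer than `y` for a maximization objective (i.e. the
non-decreasing listing of `y` is lexicographically strictly smaller than that
of `x`) iff `ρ' x < ρ' y`. -/
theorem rho_max_iso (k n : ℕ) (x y : Multiset ℕ)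
    (hx : Multiset.card x = n) (hy : Multiset.card y = n)
    (hxk : ∀ a ∈ x, a ≤ k) (hyk : ∀ a ∈ y, a ≤ k) :
    (LexLt (ascSeq n y) (ascSeq n x) ↔
      rank (fun i => k - ascSeq n x i) < rank (fun i => k - ascSeq n y i)) ∧
    (rank (fun i => k - ascSeq n x i) = rank (fun i => k - ascSeq n y i) → x = y) := by
  have hxk' : ∀ i, ascSeq n x i ≤ k := ascSeq_le hxk
  have hyk' : ∀ i, ascSeq n y i ≤ k := ascSeq_le hyk
  have hxa : Antitone fun i => k - ascSeq n x i :=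
    antitone_const_tsub.comp_monotone (ascSeq_monotone hx)
  have hya : Antitone fun i => k - ascSeq n y i :=
    antitone_const_tsub.comp_monotone (ascSeq_monotone hy)
  refine ⟨(lexLt_const_tsub_iff hxk' hyk').symm.trans
    ((rank_strictMonoOn_antitone n).lt_iff_lt hxa hya).symm, fun h => ascSeq_injective hx hy ?_⟩
  funext i
  have hi : k - ascSeq n x i = k - ascSeq n y i :=
    congrFun ((rank_strictMonoOn_antitone n).injOn hxa hya h) i
  have := hxk' i; have := hyk' i
  omega
end

section
/- For all finite multisets u, v over N = {0,...,k} (possibly of different cardinalities), u ≺mmf v if and only if f(u) <lex f(v), where <lex on ℕ^{k+1} is the strict lexicographic order on vectors read from the first coordinate. -/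
/-!
Listed non-increasingly, a multiset bounded by `k` is a block of `count k` copies of `k` followed
by the listing of its elements below `k`. Hence its lexicographic comparison first compares the
multiplicities of `k` and, on a tie, the listings of the smaller elements, which is exactly the
comparison of multiplicity vectors after one step of induction on `k`.
-/

/-- Strict lexicographic order on vectors `ℕ^{k+1}` read from the first
coordinate. -/
def VecLexLt {m : ℕ} (s t : Fin m → ℕ) : Prop :=
  ∃ j : Fin m, (∀ i, i < j → s i = t i) ∧ s j < t j

/-- `f(u) = (m_k, m_{k-1}, ..., m_0)`: the vector of multiplicities in `u` of
the elements `k, k-1, ..., 0`, listed from the largest element to the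
smallest. -/
def multVec (k : ℕ) (u : Multiset ℕ) : Fin (k + 1) → ℕ :=
  fun j => Multiset.count (k - (j : ℕ)) u

theorem List.lex_replicate_append_iff {α : Type*} [Preorder α] {a : α} {m m' : ℕ}
    {l l' : List α} (hl : ∀ x ∈ l, x < a) (hl' : ∀ x ∈ l', x < a) :
    Lex (· < ·) (replicate m a ++ l) (replicate m' a ++ l') ↔
      m < m' ∨ m = m' ∧ Lex (· < ·) l l' := by
  induction m generalizing m' with
  | zero =>
    cases m' with
    | zero => simp
    | succ m' =>
      simp only [replicate_zero, nil_append, replicate_succ, cons_append, Nat.zero_lt_succ,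
        true_or, iff_true]
      cases l with
      | nil => exact .nil
      | cons x _ => exact .rel (hl x mem_cons_self)
  | succ m ih =>
    cases m' with
    | zero =>
      simp only [replicate_succ, cons_append, replicate_zero, nil_append, Nat.not_lt_zero,
        Nat.succ_ne_zero, false_and, or_self, iff_false]
      cases l' with
      | nil => exact not_lex_nil
      | cons y _ =>
        have hy := hl' y mem_cons_self
        rw [cons_lex_cons_iff]
        rintro (h | ⟨rfl, _⟩)
        · exact lt_asymm h hy
        · exact lt_irrefl _ hy
    | succ m' =>
      simp only [replicate_succ, cons_append, cons_lex_cons_iff, lt_irrefl, true_and, false_or,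
        ih, Nat.succ_lt_succ_iff, Nat.succ_inj]

theorem Multiset.sort_ge_eq_replicate_append {α : Type*} [LinearOrder α] {k : α}
    {u : Multiset α} (hu : ∀ a ∈ u, a ≤ k) :
    u.sort (· ≥ ·) = List.replicate (u.count k) k ++ (u.filter (· < k)).sort (· ≥ ·) := by
  refine List.Perm.eq_of_pairwise' (r := (· ≥ ·)) (pairwise_sort _ _) ?_ ?_
  · rw [List.pairwise_append]
    refine ⟨List.pairwise_replicate_of_refl, pairwise_sort _ _, fun a ha b hb => ?_⟩
    rw [List.eq_of_mem_replicate ha]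
    exact ((mem_filter.mp ((mem_sort _).mp hb)).2).le
  · have h_not_lt : u.filter (fun a => ¬ a < k) = replicate (u.count k) k := by
      rw [← filter_eq']
      exact filter_congr fun a ha =>
        ⟨fun h => (hu a ha).antisymm (not_lt.mp h), fun h => h ▸ lt_irrefl a⟩
    rw [← coe_eq_coe, sort_eq, ← coe_add, sort_eq, coe_replicate, ← h_not_lt, add_comm,
      filter_add_not]

theorem Multiset.lex_sort_ge_iff {α : Type*} [LinearOrder α] {k : α} {u v : Multiset α}
    (hu : ∀ a ∈ u, a ≤ k) (hv : ∀ a ∈ v, a ≤ k) :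
    List.Lex (· < ·) (u.sort (· ≥ ·)) (v.sort (· ≥ ·)) ↔
      u.count k < v.count k ∨ u.count k = v.count k ∧
        List.Lex (· < ·) ((u.filter (· < k)).sort (· ≥ ·))
          ((v.filter (· < k)).sort (· ≥ ·)) := by
  rw [sort_ge_eq_replicate_append hu, sort_ge_eq_replicate_append hv]
  exact List.lex_replicate_append_iff (fun a ha => (mem_filter.mp ((mem_sort _).mp ha)).2)
    (fun a ha => (mem_filter.mp ((mem_sort _).mp ha)).2)

theorem vecLexLt_succ_iff {n : ℕ} {s t : Fin (n + 1) → ℕ} :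
    VecLexLt s t ↔ s 0 < t 0 ∨ s 0 = t 0 ∧ VecLexLt (s ∘ Fin.succ) (t ∘ Fin.succ) := by
  constructor
  · rintro ⟨j, h_eq, h_lt⟩
    induction j using Fin.cases with
    | zero => exact .inl h_lt
    | succ j =>
      exact .inr ⟨h_eq 0 j.succ_pos, j,
        fun i hi => h_eq i.succ (Fin.succ_lt_succ_iff.mpr hi), h_lt⟩
  · rintro (h_lt | ⟨h_eq₀, j, h_eq, h_lt⟩)
    · exact ⟨0, fun i hi => absurd hi (Fin.not_lt_zero i), h_lt⟩
    · refine ⟨j.succ, fun i hi => ?_, h_lt⟩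
      induction i using Fin.cases with
      | zero => exact h_eq₀
      | succ i => exact h_eq i (Fin.succ_lt_succ_iff.mp hi)

theorem not_vecLexLt_of_fin_zero (s t : Fin 0 → ℕ) : ¬ VecLexLt s t :=
  fun ⟨j, _⟩ => j.elim0

theorem multVec_zero (k : ℕ) (u : Multiset ℕ) : multVec k u 0 = u.count k := rfl

theorem multVec_comp_succ (k : ℕ) (u : Multiset ℕ) :
    multVec (k + 1) u ∘ Fin.succ = multVec k (u.filter (· < k + 1)) := by
  funext j
  simp only [Function.comp_apply, multVec, Fin.val_succ, Nat.add_sub_add_right]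
  exact (Multiset.count_filter_of_pos (by omega)).symm

/-- For all finite multisets `u, v` over `{0,...,k}` (possibly of different
cardinalities), `u ≺mmf v` iff `f(u) <lex f(v)`.  Here `u ≺mmf v` iff the
non-increasing listing of `u` is lexicographically strictly smaller than that
of `v` (`List.Lex (· < ·)`: a proper prefix is smaller, otherwise compare the
first differing entry). -/
theorem mmf_iff_multVec_lex (k : ℕ) (u v : Multiset ℕ)
    (hu : ∀ a ∈ u, a ≤ k) (hv : ∀ a ∈ v, a ≤ k) :
    List.Lex (· < ·) (Multiset.sort u (· ≥ ·)) (Multiset.sort v (· ≥ ·)) ↔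
      VecLexLt (multVec k u) (multVec k v) := by
  induction k generalizing u v with
  | zero =>
    rw [Multiset.lex_sort_ge_iff hu hv, vecLexLt_succ_iff, multVec_zero, multVec_zero]
    simp [not_vecLexLt_of_fin_zero]
  | succ k ih =>
    have h_le : ∀ w : Multiset ℕ, ∀ a ∈ w.filter (· < k + 1), a ≤ k :=
      fun w a ha => Nat.le_of_lt_succ (Multiset.mem_filter.mp ha).2
    rw [Multiset.lex_sort_ge_iff hu hv, vecLexLt_succ_iff, multVec_zero, multVec_zero,
      multVec_comp_succ, multVec_comp_succ, ih _ _ (h_le u) (h_le v)]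
end

section
/- Let E be a finite set, let w assign to each element of E a finite multiset over N = {0,...,k}, and let 𝒮 be a nonempty collection of subsets of E. For S in 𝒮, let W(S) be the multiset disjoint union of w(e) over e in S, and let F(S) = sum over e in S of f(w(e)) in ℕ^{k+1}. Then a solution S in 𝒮 minimizes W(S) with respect to the max-min-fair comparison ⊑mmf (i.e., W(S) ⊑mmf W(S') for all S' in 𝒮) if and only if S minimizes F(S) with respect to the lexicographic order on ℕ^{k+1} (i.e., F(S) ≤lex F(S') for all S' in 𝒮). -/
/-- Lexicographic order `≤lex` on vectors `ℕ^{k+1}`. -/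
def VecLexLe {m : ℕ} (s t : Fin m → ℕ) : Prop :=
  s = t ∨ VecLexLt s t

/-- Max-min-fair comparison `u ⊑mmf v` of finite multisets over `ℕ`:
the non-increasing listing of `u` equals that of `v`, or is a proper prefix of
it, or has the smaller entry at the first differing position
(`List.Lex (· < ·)`). -/
def MmfLe (u v : Multiset ℕ) : Prop :=
  Multiset.sort u (· ≥ ·) = Multiset.sort v (· ≥ ·) ∨
    List.Lex (· < ·) (Multiset.sort u (· ≥ ·)) (Multiset.sort v (· ≥ ·))

namespace List

variable {α : Type*} [LinearOrder α]

lemma count_eq_zero_of_pairwise_ge_of_lt {a d : α} {l : List α}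
    (hl : (a :: l).Pairwise (· ≥ ·)) (had : a < d) : (a :: l).count d = 0 :=
  count_eq_zero.mpr fun hd => by
    rcases mem_cons.mp hd with rfl | hd
    · exact had.false
    · exact (rel_of_pairwise_cons hl hd).not_gt had

theorem exists_count_lt_of_lt_of_pairwise_ge {l m : List α} (h : l < m)
    (hl : l.Pairwise (· ≥ ·)) (hm : m.Pairwise (· ≥ ·)) :
    ∃ c, (∀ d, c < d → l.count d = m.count d) ∧ l.count c < m.count c := by
  induction (h : List.Lex (· < ·) l m) with
  | @nil b t =>
    exact ⟨b, fun d hd => (count_eq_zero_of_pairwise_ge_of_lt hm hd).symm, by simp⟩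
  | @cons a l m _ ih =>
    obtain ⟨c, heq, hlt⟩ := ih hl.of_cons hm.of_cons
    refine ⟨c, fun d hd => by simp only [count_cons, heq d hd], ?_⟩
    simp only [count_cons]
    omega
  | @rel a l b m hab =>
    refine ⟨b, fun d hd => ?_, ?_⟩
    · rw [count_eq_zero_of_pairwise_ge_of_lt hl (hab.trans hd),
        count_eq_zero_of_pairwise_ge_of_lt hm hd]
    · rw [count_eq_zero_of_pairwise_ge_of_lt hl hab]
      simp

end List

lemma mmfLe_iff_sort_le {u v : Multiset ℕ} :
    MmfLe u v ↔ u.sort (· ≥ ·) ≤ v.sort (· ≥ ·) :=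
  le_iff_eq_or_lt.symm

lemma vecLexLe_iff_toLex_le {m : ℕ} {s t : Fin m → ℕ} : VecLexLe s t ↔ toLex s ≤ toLex t := by
  rw [le_iff_eq_or_lt, toLex_inj]
  rfl

lemma multVec_eq_count_sort (k : ℕ) (u : Multiset ℕ) :
    multVec k u = fun j : Fin (k + 1) => (u.sort (· ≥ ·)).count (k - (j : ℕ)) := by
  funext j
  rw [multVec, ← Multiset.coe_count, Multiset.sort_eq]

lemma strictMonoOn_toLex_count (k : ℕ) :
    StrictMonoOn (fun l : List ℕ => toLex fun j : Fin (k + 1) => l.count (k - (j : ℕ)))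
      {l | l.Pairwise (· ≥ ·) ∧ ∀ a ∈ l, a ≤ k} := by
  rintro l ⟨hl, -⟩ m ⟨hm, hmk⟩ hlm
  obtain ⟨c, heq, hlt⟩ := List.exists_count_lt_of_lt_of_pairwise_ge hlm hl hm
  have hck : c ≤ k := hmk c (List.count_pos_iff.mp (by omega))
  refine ⟨⟨k - c, by omega⟩, fun i hi => heq _ (by simp only [Fin.lt_def] at hi; omega), ?_⟩
  simpa [Nat.sub_sub_self hck] using hlt

theorem mmfLe_iff_vecLexLe_multVec {k : ℕ} {u v : Multiset ℕ} (hu : ∀ a ∈ u, a ≤ k)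
    (hv : ∀ a ∈ v, a ≤ k) : MmfLe u v ↔ VecLexLe (multVec k u) (multVec k v) := by
  have hmem : ∀ {x : Multiset ℕ}, (∀ a ∈ x, a ≤ k) →
      x.sort (· ≥ ·) ∈ {l : List ℕ | l.Pairwise (· ≥ ·) ∧ ∀ a ∈ l, a ≤ k} :=
    fun hx => ⟨Multiset.pairwise_sort _ _, fun a ha => hx a (Multiset.mem_sort _ |>.mp ha)⟩
  rw [mmfLe_iff_sort_le, vecLexLe_iff_toLex_le, multVec_eq_count_sort, multVec_eq_count_sort]
  exact ((strictMonoOn_toLex_count k).le_iff_le (hmem hu) (hmem hv)).symm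

lemma multVec_sum (k : ℕ) {ι : Type*} (s : Finset ι) (w : ι → Multiset ℕ) :
    multVec k (∑ e ∈ s, w e) = ∑ e ∈ s, multVec k (w e) := by
  funext j
  simp only [multVec, Multiset.count_sum', Finset.sum_apply]

theorem mmf_min_iff_lex_min_general (k : ℕ) (α : Type*)
    (w : α → Multiset ℕ) (hw : ∀ e, ∀ a ∈ w e, a ≤ k)
    (𝒮 : Set (Finset α)) (S : Finset α) :
    (∀ S' ∈ 𝒮, MmfLe (∑ e ∈ S, w e) (∑ e ∈ S', w e)) ↔
      (∀ S' ∈ 𝒮, VecLexLe (∑ e ∈ S, multVec k (w e)) (∑ e ∈ S', multVec k (w e))) := by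
  have hW (T : Finset α) : ∀ a ∈ ∑ e ∈ T, w e, a ≤ k := fun a ha => by
    obtain ⟨e, -, hae⟩ := Multiset.mem_sum.mp ha
    exact hw e a hae
  refine forall₂_congr fun S' _ => ?_
  rw [← multVec_sum, ← multVec_sum]
  exact mmfLe_iff_vecLexLe_multVec (hW S) (hW S')

/-- Let `E` (a finite type `α`) be the ground set, `w` assign to each element a
finite multiset over `{0,...,k}`, and `𝒮` be a nonempty collection of subsets
of `E`.  With `W(S) = ⊎_{e ∈ S} w(e)` and `F(S) = ∑_{e ∈ S} f(w(e)) ∈ ℕ^{k+1}`,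
a solution `S ∈ 𝒮` minimizes `W` w.r.t. `⊑mmf` iff it minimizes `F` w.r.t. the
lexicographic order on `ℕ^{k+1}`. -/
theorem mmf_min_iff_lex_min (k : ℕ) (α : Type*) [Fintype α] [DecidableEq α]
    (w : α → Multiset ℕ) (hw : ∀ e, ∀ a ∈ w e, a ≤ k)
    (𝒮 : Set (Finset α)) (h𝒮 : 𝒮.Nonempty) (S : Finset α) (hS : S ∈ 𝒮) :
    (∀ S' ∈ 𝒮, MmfLe (∑ e ∈ S, w e) (∑ e ∈ S', w e)) ↔
      (∀ S' ∈ 𝒮, VecLexLe (∑ e ∈ S, multVec k (w e)) (∑ e ∈ S', multVec k (w e))) :=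
  mmf_min_iff_lex_min_general k α w hw 𝒮 S
end
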